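/- Let $n, d, p$ be non-negative integers with $0 \le d < n$ and $p \le n - d$. Then for every co-signotope $\tau \in \bar{\mathcal{S}}_p(n,d)$, each $+$-component of $\tau$ contains exactly one source subset $S_{n,d,i}$ (for exactly one index $i \in \{0,1,\dots,d\}$). -/

import Mathlib

/-! Common definitions: signotopes and co-signotopes on `[n] = {1, …, n}` (encoded as
`Finset.Icc 1 n` in `ℕ`), sign functions are `Finset ℕ → Bool` (`true` = `+`, `false` = `-`)
that vanish (are `-`) away from the relevant subsets. -/

open Classical in
/-- The sign function with `+`-set `S` (and `-` elsewhere). -/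
noncomputable def ofPlusSet (S : Set (Finset ℕ)) : Finset ℕ → Bool :=
  fun A => if A ∈ S then true else false

/-- Number of sign changes in a list of signs. -/
def signChanges (l : List Bool) : ℕ :=
  ((l.zip l.tail).filter fun p => p.1 ≠ p.2).length

/-- Number of `+`-subsets of a sign function. -/
noncomputable def plusCount (τ : Finset ℕ → Bool) : ℕ :=
  {A : Finset ℕ | τ A = true}.ncard

/-- The series of signs `τ (C ∪ {x})` for `x ∈ [n] \ C` in increasing order.
For a `d`-subset `B` with `i`-th smallest element `b`, `series n τ (B.erase b)` is
the `(τ,B,i)`-series. -/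
def series (n : ℕ) (τ : Finset ℕ → Bool) (C : Finset ℕ) : List Bool :=
  ((Finset.Icc 1 n \ C).sort (· ≤ ·)).map fun x => τ (insert x C)

/-- An `r`-signotope on `[n]`, encoded as a sign function on all of `Finset ℕ`
which is `-` away from the `r`-subsets of `[n]`. -/
def IsSignotope (n r : ℕ) (σ : Finset ℕ → Bool) : Prop :=
  (∀ A, σ A = true → A ⊆ Finset.Icc 1 n ∧ A.card = r) ∧
  ∀ X : Finset ℕ, X ⊆ Finset.Icc 1 n → X.card = r + 1 →
    signChanges ((X.sort (· ≤ ·)).map fun x => σ (X.erase x)) ≤ 1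

/-- A `d`-co-signotope on `[n]`: every `(τ,B,i)`-series has at most one sign change. -/
def IsCoSignotope (n d : ℕ) (τ : Finset ℕ → Bool) : Prop :=
  (∀ A, τ A = true → A ⊆ Finset.Icc 1 n ∧ A.card = d) ∧
  ∀ B : Finset ℕ, B ⊆ Finset.Icc 1 n → B.card = d → ∀ b ∈ B,
    signChanges (series n τ (B.erase b)) ≤ 1

/-- `𝒮_p(n,r)`: `r`-signotopes on `[n]` with exactly `p` `+`-signs. -/
noncomputable def sigSet (n r p : ℕ) : Set (Finset ℕ → Bool) :=
  {σ | IsSignotope n r σ ∧ plusCount σ = p}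

/-- `𝒮_{≤p}(n,r)`. -/
noncomputable def sigSetLe (n r p : ℕ) : Set (Finset ℕ → Bool) :=
  {σ | IsSignotope n r σ ∧ plusCount σ ≤ p}

/-- `𝒮̄_p(n,d)`: `d`-co-signotopes on `[n]` with exactly `p` `+`-subsets. -/
noncomputable def coSigSet (n d p : ℕ) : Set (Finset ℕ → Bool) :=
  {τ | IsCoSignotope n d τ ∧ plusCount τ = p}

/-- `𝒮̄_{≤p}(n,d)`. -/
noncomputable def coSigSetLe (n d p : ℕ) : Set (Finset ℕ → Bool) :=
  {τ | IsCoSignotope n d τ ∧ plusCount τ ≤ p}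

/-- `σ` and `τ` differ by a single step: `σ⁻¹(+) ⊊ τ⁻¹(+)` and `|τ⁻¹(+)| = |σ⁻¹(+)| + 1`. -/
noncomputable def SingleStep (σ τ : Finset ℕ → Bool) : Prop :=
  {A | σ A = true} ⊂ {A | τ A = true} ∧ plusCount τ = plusCount σ + 1

/-- The higher Bruhat order on `r`-signotopes on `[n]`: reflexive-transitive closure of
the single step relation. -/
noncomputable def BruhatLe (n r : ℕ) (σ τ : Finset ℕ → Bool) : Prop :=
  Relation.ReflTransGen (fun a b => IsSignotope n r a ∧ IsSignotope n r b ∧ SingleStep a b) σ τ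

/-- The complementary higher Bruhat order on `d`-co-signotopes on `[n]`. -/
noncomputable def CoBruhatLe (n d : ℕ) (σ τ : Finset ℕ → Bool) : Prop :=
  Relation.ReflTransGen (fun a b => IsCoSignotope n d a ∧ IsCoSignotope n d b ∧ SingleStep a b) σ τ

/-- Adjacency in the graph `G_{n,d}`: `B' = (B \ {x}) ∪ {y}` with no element of `B \ {x}`
strictly between `x` and `y`. -/
def GAdj (n d : ℕ) (B B' : Finset ℕ) : Prop :=
  B ⊆ Finset.Icc 1 n ∧ B.card = d ∧ B' ⊆ Finset.Icc 1 n ∧ B'.card = d ∧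
  ∃ x ∈ B, ∃ y ∈ Finset.Icc 1 n, y ∉ B ∧ B' = insert y (B.erase x) ∧
    ∀ z ∈ B.erase x, ¬(min x y < z ∧ z < max x y)

/-- The source subset `S_{n,d,i} = {1,…,i} ∪ {n-d+i+1,…,n}`. -/
def sourceSubset (n d i : ℕ) : Finset ℕ :=
  Finset.Icc 1 i ∪ Finset.Icc (n - d + i + 1) n

/-- Connectivity inside the `+`-subsets of `τ` (the induced subgraph `G_{n,d}[τ]`). -/
def plusConn (n d : ℕ) (τ : Finset ℕ → Bool) : Finset ℕ → Finset ℕ → Prop :=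
  Relation.ReflTransGen fun A A' => τ A = true ∧ τ A' = true ∧ GAdj n d A A'

/-- The vertex set `𝒞^τ_i` of the `+`-component of `τ` containing `S_{n,d,i}`
(empty if `S_{n,d,i}` is not a `+`-subset). -/
def comp (n d : ℕ) (τ : Finset ℕ → Bool) (i : ℕ) : Set (Finset ℕ) :=
  {B | τ (sourceSubset n d i) = true ∧ τ B = true ∧ plusConn n d τ (sourceSubset n d i) B}

/-- The `j`-th smallest element (1-based) of a finite set of naturals. -/
def nthElt (B : Finset ℕ) (j : ℕ) : ℕ := (B.sort (· ≤ ·)).getD (j - 1) 0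

/-- `b_j` with the conventions `b_0 = 0` and `b_{d+1} = n+1` (as an integer). -/
def extNth (n d : ℕ) (B : Finset ℕ) (j : ℕ) : ℤ :=
  if j = 0 then 0 else if j ≤ d then (nthElt B j : ℤ) else (n : ℤ) + 1

/-- A series is left-aligned if it starts with `+` and ends with `-`. -/
def LeftAligned (l : List Bool) : Prop :=
  l.head? = some true ∧ l.getLast? = some false

/-- A series is right-aligned if it starts with `-` and ends with `+`. -/
def RightAligned (l : List Bool) : Prop :=
  l.head? = some false ∧ l.getLast? = some true

/-- `𝒮̄_{p,i}(n,d)`: co-signotopes in `𝒮̄_p(n,d)` whose only nonempty `+`-component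
is `𝒞^τ_i` (i.e. every `+`-subset lies in `𝒞^τ_i`). -/
noncomputable def coSigOnly (n d p i : ℕ) : Set (Finset ℕ → Bool) :=
  {τ | IsCoSignotope n d τ ∧ plusCount τ = p ∧ ∀ B, τ B = true → B ∈ comp n d τ i}

/-- `Z(d,i)`: points `(a_1,…,a_d) ∈ ℤ_{>0}^d` (0-indexed in Lean) with `a_j ≥ a_{j-1}`
for `j ∈ [2,i]` and `a_j ≥ a_{j+1}` for `j ∈ [i+1,d-1]` (1-based indices). -/
def ZSet (d i : ℕ) : Set (Fin d → ℤ) :=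
  {a | (∀ j, 0 < a j) ∧
    (∀ j k : Fin d, (j : ℕ) + 1 = (k : ℕ) → (k : ℕ) + 1 ≤ i → a j ≤ a k) ∧
    (∀ j k : Fin d, (j : ℕ) + 1 = (k : ℕ) → i ≤ (j : ℕ) → a k ≤ a j)}

/-- A `(d,i)`-Ferrers diagram with respect to `p`. -/
def IsFerrers (d i p : ℕ) (F : Set (Fin d → ℤ)) : Prop :=
  F ⊆ ZSet d i ∧ F.ncard = p ∧
  ∀ a ∈ F, ∀ a' ∈ ZSet d i, (∀ j, a' j ≤ a j) → a' ∈ F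

/-- The number of `(d,i)`-Ferrers diagrams with respect to `p`. -/
noncomputable def ferrersCount (d i p : ℕ) : ℕ :=
  {F : Set (Fin d → ℤ) | IsFerrers d i p F}.ncard

/-- `f_{n,d,i,j}` (here `j` is the 1-based coordinate index). -/
def fFun (n d i j : ℕ) (x : ℕ) : ℤ :=
  if j ≤ i then (x : ℤ) - j + 1 else ((n : ℤ) - x) - ((d : ℤ) - j) + 1

/-- `g_{n,d,i}` maps a `d`-subset `B = (b_1 < … < b_d)` to
`(f_{n,d,i,1}(b_1), …, f_{n,d,i,d}(b_d))`. -/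
def gMap (n d i : ℕ) (B : Finset ℕ) : Fin d → ℤ :=
  fun k => fFun n d i ((k : ℕ) + 1) (nthElt B ((k : ℕ) + 1))

/-- A sparse composition of `p` of length `d+1`. -/
def IsSparseComposition (d p : ℕ) (c : Fin (d + 1) → ℕ) : Prop :=
  (∑ i, c i) = p ∧
  ∀ i : Fin (d + 1), 1 ≤ (i : ℕ) →
    c i = 0 ∨ c ⟨(i : ℕ) - 1, lt_of_le_of_lt (Nat.sub_le _ _) i.isLt⟩ = 0

/-- The component `τ_i` of the `+`-component decomposition `Δ(τ)`:
the sign function whose `+`-set is `𝒞^τ_i`. -/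
noncomputable def compFun (n d : ℕ) (τ : Finset ℕ → Bool) (i : ℕ) : Finset ℕ → Bool :=
  ofPlusSet (comp n d τ i)

/-- Keep the `i` smallest elements of `B` and shift the others by `ñ - n`
(this is `g⁻¹_{ñ,d,i} ∘ g_{n,d,i}` on `d`-subsets). -/
def gammaSet (n tn i : ℕ) (B : Finset ℕ) : Finset ℕ :=
  ((B.sort (· ≤ ·)).mapIdx fun k x => if k < i then x else x + tn - n).toFinset

/-- The map `h_{n,ñ,d,p,i}` on sign functions. -/
noncomputable def hFun (n tn i : ℕ) (τ : Finset ℕ → Bool) : Finset ℕ → Bool :=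
  ofPlusSet {A | ∃ B, τ B = true ∧ A = gammaSet n tn i B}

open Classical in
/-- `γ_{τ,ñ}(B)`: replace `b_j` by `b_j + ñ - n` whenever the `(τ,B,j)`-series is
right-aligned. -/
noncomputable def gammaFun (n tn : ℕ) (τ : Finset ℕ → Bool) (B : Finset ℕ) : Finset ℕ :=
  B.image fun x => if RightAligned (series n τ (B.erase x)) then x + tn - n else x

/-- The simple bijection `φ_{n,ñ,d,p}` on sign functions. -/
noncomputable def phiFun (n tn : ℕ) (τ : Finset ℕ → Bool) : Finset ℕ → Bool :=
  ofPlusSet {A | ∃ B, τ B = true ∧ A = gammaFun n tn τ B}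

/-!
For a `+`-subset `B` and `c ∈ B`, the `(τ,B,c)`-series is `+` at `c`; having at most one sign
change, it is `+` on the whole part below `c` or on the whole part above `c`, and not on both
since it has `n - d + 1 > p` entries. Call `c` left- or right-aligned accordingly. Counting
`+`-subsets shows that alignment survives every edge of `G_{n,d}[τ]`, the moved element included,
so the number of left-aligned elements is constant on a `+`-component; at `S_{n,d,i}` it is `i`,
whence uniqueness. For existence, moving a left-aligned element one step down or a right-aligned
one one step up stays among the `+`-subsets and decreases `∑ c` over left-aligned plus
`∑ (n + 1 - c)` over right-aligned elements; a `+`-subset admitting no such move has its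
left-aligned elements at `1, …, i` and its right-aligned ones at `n - d + i + 1, …, n`.
-/

open Finset

theorem signChanges_cons_cons (a b : Bool) (l : List Bool) :
    signChanges (a :: b :: l) = (if a = b then 0 else 1) + signChanges (b :: l) := by
  simp only [signChanges, List.zip, List.tail]
  split <;> simp_all [add_comm]

theorem signChanges_le_cons (a : Bool) (l : List Bool) : signChanges l ≤ signChanges (a :: l) := by
  cases l with
  | nil => simp [signChanges]
  | cons b t => rw [signChanges_cons_cons]; omega

theorem getElem?_zero_of_signChanges_eq_zero {l : List Bool} (h : signChanges l = 0) {k : ℕ}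
    {b : Bool} (hk : l[k]? = some b) : l[0]? = some b := by
  induction l generalizing k with
  | nil => simp at hk
  | cons a t ih =>
    obtain _ | k := k
    · exact hk
    obtain _ | ⟨c, t⟩ := t
    · simp at hk
    rw [signChanges_cons_cons] at h
    have hac : a = c := by by_contra hne; simp [hne] at h
    rw [List.getElem?_cons_succ] at hk
    simpa [hac] using ih (by omega) hk

theorem getElem?_eq_of_signChanges_le_one {l : List Bool} (h : signChanges l ≤ 1)
    {i j k : ℕ} {b : Bool} (hij : i ≤ j) (hjk : j ≤ k) (hi : l[i]? = some b)
    (hk : l[k]? = some b) : l[j]? = some b := by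
  induction l generalizing i j k with
  | nil => simp at hi
  | cons a t ih =>
    obtain _ | j := j
    · obtain rfl : i = 0 := by omega
      exact hi
    obtain _ | k := k
    · omega
    rw [List.getElem?_cons_succ] at hk ⊢
    obtain _ | i := i
    · obtain _ | ⟨c, t⟩ := t
      · simp at hk
      obtain rfl : a = b := by simpa using hi
      by_cases hc : c = a
      · exact ih ((signChanges_le_cons _ _).trans h) (Nat.zero_le j) (by omega) (by simp [hc]) hk
      · rw [signChanges_cons_cons, if_neg (Ne.symm hc)] at h
        simpa [hc] using getElem?_zero_of_signChanges_eq_zero (by omega) hk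
    · exact ih (i := i) ((signChanges_le_cons _ _).trans h) (by omega) (by omega)
        (by simpa using hi) hk

theorem card_image_insert {A C : Finset ℕ} (h : Disjoint A C) :
    #(A.image (insert · C)) = #A :=
  card_image_of_injOn fun _ hz _ _ hzw => (insert_inj (disjoint_left.mp h hz)).mp hzw

theorem card_sourceSubset {n d i : ℕ} (hid : i ≤ d) (hdn : d ≤ n) :
    #(sourceSubset n d i) = d := by
  rw [sourceSubset, card_union_of_disjoint, Nat.card_Icc, Nat.card_Icc]
  · omega
  · simp only [disjoint_left, mem_Icc]
    omega

theorem mem_sourceSubset {n d i c : ℕ} :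
    c ∈ sourceSubset n d i ↔ (1 ≤ c ∧ c ≤ i) ∨ (n - d + i + 1 ≤ c ∧ c ≤ n) := by
  simp [sourceSubset]

theorem Icc_one_subset_of_pred_mem {s : Finset ℕ} (h : ∀ c ∈ s, 1 < c → c - 1 ∈ s) {c : ℕ}
    (hc : c ∈ s) : Icc 1 c ⊆ s := by
  intro z hz
  obtain ⟨hz1, hzc⟩ := mem_Icc.mp hz
  clear hz
  induction c, hzc using Nat.le_induction with
  | base => exact hc
  | succ c hzc ih => exact ih (by simpa using h _ hc (by omega))

theorem Icc_subset_of_succ_mem {s : Finset ℕ} {n : ℕ} (h : ∀ c ∈ s, c < n → c + 1 ∈ s) {c : ℕ}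
    (hc : c ∈ s) : Icc c n ⊆ s := by
  intro z hz
  obtain ⟨hcz, hzn⟩ := mem_Icc.mp hz
  clear hz
  induction z, hcz using Nat.le_induction with
  | base => exact hc
  | succ z hcz ih => exact h z (ih (by omega)) (by omega)

theorem eq_sourceSubset_of_closed {n d : ℕ} {B : Finset ℕ} (hBU : B ⊆ Icc 1 n) (hBd : #B = d)
    (P : ℕ → Prop) [DecidablePred P] (hP : ∀ c₁ ∈ B, ∀ c₂ ∈ B, c₁ < c₂ → P c₂ → P c₁)
    (hdown : ∀ c ∈ B, P c → 1 < c → c - 1 ∈ B) (hup : ∀ c ∈ B, ¬P c → c < n → c + 1 ∈ B) :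
    B = sourceSubset n d #{c ∈ B | P c} := by
  have hL : ∀ c ∈ B, P c → Icc 1 c ⊆ {c ∈ B | P c} := fun c hc hPc =>
    Icc_one_subset_of_pred_mem (fun c hc h1 => by
      obtain ⟨hc, hPc⟩ := mem_filter.mp hc
      exact mem_filter.mpr ⟨hdown c hc hPc h1, hP _ (hdown c hc hPc h1) c hc (by omega) hPc⟩)
      (mem_filter.mpr ⟨hc, hPc⟩)
  have hR : ∀ c ∈ B, ¬P c → Icc c n ⊆ {c ∈ B | ¬P c} := fun c hc hPc =>
    Icc_subset_of_succ_mem (fun c hc hn => by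
      obtain ⟨hc, hPc⟩ := mem_filter.mp hc
      exact mem_filter.mpr ⟨hup c hc hPc hn, fun h => hPc (hP c hc _ (hup c hc hPc hn)
        (by omega) h)⟩)
      (mem_filter.mpr ⟨hc, hPc⟩)
  have hsplit : #{c ∈ B | P c} + #{c ∈ B | ¬P c} = d := hBd ▸ card_filter_add_card_filter_not P
  have hdn : d ≤ n := by simpa [hBd] using card_le_card hBU
  refine eq_of_subset_of_card_le (fun c hc => mem_sourceSubset.mpr ?_) ?_
  · have hcn := mem_Icc.mp (hBU hc)
    by_cases hPc : P c
    · have := card_le_card (hL c hc hPc)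
      rw [Nat.card_Icc] at this
      omega
    · have := card_le_card (hR c hc hPc)
      rw [Nat.card_Icc] at this
      omega
  · rw [card_sourceSubset (by omega) hdn, hBd]

theorem gAdj_insert_erase {n : ℕ} {B : Finset ℕ} (hBU : B ⊆ Icc 1 n) {x y : ℕ} (hx : x ∈ B)
    (hy : y ∈ Icc 1 n) (hyB : y ∉ B) (hgap : ∀ z ∈ B.erase x, ¬(min x y < z ∧ z < max x y)) :
    GAdj n #B B (insert y (B.erase x)) := by
  refine ⟨hBU, rfl, insert_subset hy ((erase_subset x B).trans hBU), ?_, x, hx, y, hy, hyB, rfl,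
    hgap⟩
  rw [card_insert_of_notMem fun h => hyB (mem_of_mem_erase h), card_erase_add_one hx]

/-- For a `+`-subset `B ∋ c`, `PlusBelow n τ (B.erase c) c` says that the `(τ,B,c)`-series is `+`
up to `c`; as the series has at most one sign change and more than `p` entries, this means that
it is left-aligned. -/
def PlusBelow (n : ℕ) (τ : Finset ℕ → Bool) (C : Finset ℕ) (c : ℕ) : Prop :=
  ∀ z ∈ Icc 1 n \ C, z ≤ c → τ (insert z C) = true

def PlusAbove (n : ℕ) (τ : Finset ℕ → Bool) (C : Finset ℕ) (c : ℕ) : Prop :=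
  ∀ z ∈ Icc 1 n \ C, c ≤ z → τ (insert z C) = true

theorem plusBelow_of_Icc_subset {n : ℕ} {τ : Finset ℕ → Bool} {B : Finset ℕ} (hB : τ B = true)
    {c : ℕ} (hc : c ∈ B) (h : Icc 1 c ⊆ B) : PlusBelow n τ (B.erase c) c := by
  intro z hz hzc
  obtain ⟨hzn, hzC⟩ := mem_sdiff.mp hz
  obtain rfl : z = c := by
    by_contra hne
    exact hzC (mem_erase.mpr ⟨hne, h (mem_Icc.mpr ⟨(mem_Icc.mp hzn).1, hzc⟩)⟩)
  rwa [insert_erase hc]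

theorem plusAbove_of_Icc_subset {n : ℕ} {τ : Finset ℕ → Bool} {B : Finset ℕ} (hB : τ B = true)
    {c : ℕ} (hc : c ∈ B) (h : Icc c n ⊆ B) : PlusAbove n τ (B.erase c) c := by
  intro z hz hcz
  obtain ⟨hzn, hzC⟩ := mem_sdiff.mp hz
  obtain rfl : z = c := by
    by_contra hne
    exact hzC (mem_erase.mpr ⟨hne, h (mem_Icc.mpr ⟨hcz, (mem_Icc.mp hzn).2⟩)⟩)
  rwa [insert_erase hc]

section CoSignotope

variable {n d : ℕ} {τ : Finset ℕ → Bool}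

theorem IsCoSignotope.series_convex (hco : IsCoSignotope n d τ) {B : Finset ℕ}
    (hBU : B ⊆ Icc 1 n) (hBd : #B = d) {c : ℕ} (hc : c ∈ B) {b : Bool} {z₁ z₂ z₃ : ℕ}
    (h₁ : z₁ ∈ Icc 1 n \ B.erase c) (h₂ : z₂ ∈ Icc 1 n \ B.erase c)
    (h₃ : z₃ ∈ Icc 1 n \ B.erase c) (h₁₂ : z₁ ≤ z₂) (h₂₃ : z₂ ≤ z₃)
    (e₁ : τ (insert z₁ (B.erase c)) = b) (e₃ : τ (insert z₃ (B.erase c)) = b) :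
    τ (insert z₂ (B.erase c)) = b := by
  set l := (Icc 1 n \ B.erase c).sort (· ≤ ·)
  have hmono : StrictMono l.get := (sortedLT_sort _).strictMono_get
  have position : ∀ z ∈ Icc 1 n \ B.erase c, ∃ i : Fin l.length,
      l.get i = z ∧ (series n τ (B.erase c))[(i : ℕ)]? = some (τ (insert z (B.erase c))) := by
    intro z hz
    obtain ⟨i, rfl⟩ := List.mem_iff_get.mp ((mem_sort (· ≤ ·)).mpr hz)
    exact ⟨i, rfl, by simp [series, l, List.getElem?_eq_getElem i.isLt]⟩
  obtain ⟨i₁, rfl, s₁⟩ := position z₁ h₁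
  obtain ⟨i₂, rfl, s₂⟩ := position _ h₂
  obtain ⟨i₃, rfl, s₃⟩ := position _ h₃
  have key := getElem?_eq_of_signChanges_le_one (hco.2 B hBU hBd c hc)
    (hmono.le_iff_le.mp h₁₂) (hmono.le_iff_le.mp h₂₃) (s₁.trans (congrArg some e₁))
    (s₃.trans (congrArg some e₃))
  rw [s₂] at key
  exact Option.some_injective _ key

theorem IsCoSignotope.plusBelow_or_plusAbove (hco : IsCoSignotope n d τ) {B : Finset ℕ}
    (hB : τ B = true) {c : ℕ} (hc : c ∈ B) :
    PlusBelow n τ (B.erase c) c ∨ PlusAbove n τ (B.erase c) c := by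
  obtain ⟨hBU, hBd⟩ := hco.1 B hB
  by_contra! h
  simp only [PlusBelow, PlusAbove, not_forall, Bool.not_eq_true] at h
  obtain ⟨⟨z, hz, hzc, hτz⟩, ⟨w, hw, hcw, hτw⟩⟩ := h
  have hcC : c ∈ Icc 1 n \ B.erase c := mem_sdiff.mpr ⟨hBU hc, notMem_erase c B⟩
  have := hco.series_convex hBU hBd hc hz hcC hw hzc hcw hτz hτw
  rw [insert_erase hc, hB] at this
  exact Bool.noConfusion this

theorem IsCoSignotope.plusBelow_of_plusBelow (hco : IsCoSignotope n d τ) {B : Finset ℕ}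
    (hB : τ B = true) {x y : ℕ} (hx : x ∈ B) (hy : y ∈ Icc 1 n \ B.erase x)
    (hyτ : τ (insert y (B.erase x)) = true) (h : PlusBelow n τ (B.erase x) x) :
    PlusBelow n τ (B.erase x) y := by
  obtain ⟨hBU, hBd⟩ := hco.1 B hB
  have hxC : x ∈ Icc 1 n \ B.erase x := mem_sdiff.mpr ⟨hBU hx, notMem_erase x B⟩
  intro z hz hzy
  rcases le_total z x with hzx | hxz
  · exact h z hz hzx
  · exact hco.series_convex hBU hBd hx hxC hz hy hxz hzy (h x hxC le_rfl) hyτ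

theorem IsCoSignotope.plusBelow_moved_iff (hco : IsCoSignotope n d τ) {B : Finset ℕ}
    (hB : τ B = true) {x y : ℕ} (hx : x ∈ B) (hy : y ∈ Icc 1 n) (hyB : y ∉ B)
    (hB' : τ (insert y (B.erase x)) = true) :
    PlusBelow n τ (B.erase x) y ↔ PlusBelow n τ (B.erase x) x := by
  obtain ⟨hBU, -⟩ := hco.1 B hB
  have hyC : y ∉ B.erase x := fun h => hyB (mem_of_mem_erase h)
  refine ⟨fun h => ?_, hco.plusBelow_of_plusBelow hB hx (mem_sdiff.mpr ⟨hy, hyC⟩) hB'⟩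
  have := hco.plusBelow_of_plusBelow hB' (mem_insert_self y _)
    (x := y) (y := x) (by rw [erase_insert hyC]; exact mem_sdiff.mpr ⟨hBU hx, notMem_erase x B⟩)
    (by rwa [erase_insert hyC, insert_erase hx]) (by rwa [erase_insert hyC])
  rwa [erase_insert hyC] at this

theorem IsCoSignotope.card_le_plusCount (hco : IsCoSignotope n d τ) {F : Finset (Finset ℕ)}
    (hF : ∀ S ∈ F, τ S = true) : #F ≤ plusCount τ := by
  have hfin : {A : Finset ℕ | τ A = true}.Finite :=
    (Icc 1 n).powerset.finite_toSet.subset fun A hA => mem_powerset.mpr (hco.1 A hA).1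
  rw [plusCount, ← Set.ncard_coe_finset]
  exact Set.ncard_le_ncard (fun A hA => hF A hA) hfin

/-- The `(τ,B,c)`-series has `n - d + 1 > p` entries. -/
theorem IsCoSignotope.not_plusBelow_and_plusAbove (hco : IsCoSignotope n d τ)
    (hp : plusCount τ + d ≤ n) {B : Finset ℕ} (hB : τ B = true) {c : ℕ} (hc : c ∈ B) :
    ¬(PlusBelow n τ (B.erase c) c ∧ PlusAbove n τ (B.erase c) c) := by
  rintro ⟨hbelow, habove⟩
  obtain ⟨hBU, hBd⟩ := hco.1 B hB
  have hall : ∀ z ∈ Icc 1 n \ B.erase c, τ (insert z (B.erase c)) = true := fun z hz =>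
    (le_total z c).elim (hbelow z hz) (habove z hz)
  have hcard := hco.card_le_plusCount (forall_mem_image.mpr hall)
  rw [card_image_insert sdiff_disjoint, card_sdiff_of_subset ((erase_subset c B).trans hBU),
    Nat.card_Icc, card_erase_of_mem hc, hBd] at hcard
  have : 0 < d := hBd ▸ card_pos.mpr ⟨c, hc⟩
  omega

/-- The `+`-subsets `C₁ ∪ {z}` (`z ≤ a`) and `C₂ ∪ {w}` (`w ≥ a`) would be at least
`n + 1 - d > p` in number. -/
theorem IsCoSignotope.false_of_two_families (hco : IsCoSignotope n d τ) (hp : plusCount τ + d ≤ n)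
    {C₁ C₂ : Finset ℕ} {a : ℕ} (ha : a ∈ Icc 1 n) (haC : a ∉ C₁)
    (h₁ : PlusBelow n τ C₁ a) (h₂ : PlusAbove n τ C₂ a)
    (hne : ∀ z ∉ C₁, ∀ w ∉ C₂, z ≤ a → a ≤ w → insert z C₁ ≠ insert w C₂)
    (hcard : #(C₁ ∩ Icc 1 a ∪ C₂ ∩ Icc a n) ≤ d) : False := by
  set F₁ := (Icc 1 a \ C₁).image (insert · C₁)
  set F₂ := (Icc a n \ C₂).image (insert · C₂)
  have hdisj : Disjoint F₁ F₂ := by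
    simp only [F₁, F₂, disjoint_left, mem_image, mem_sdiff, mem_Icc]
    rintro _ ⟨z, ⟨hz, hzC⟩, rfl⟩ ⟨w, ⟨hw, hwC⟩, hwz⟩
    exact hne z hzC w hwC hz.2 hw.1 hwz.symm
  rw [mem_Icc] at ha
  have hplus : ∀ S ∈ F₁ ∪ F₂, τ S = true := by
    simp only [F₁, F₂, mem_union, mem_image, mem_sdiff, mem_Icc]
    rintro _ (⟨z, ⟨hz, hzC⟩, rfl⟩ | ⟨w, ⟨hw, hwC⟩, rfl⟩)
    · exact h₁ z (mem_sdiff.mpr ⟨mem_Icc.mpr ⟨hz.1, by omega⟩, hzC⟩) hz.2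
    · exact h₂ w (mem_sdiff.mpr ⟨mem_Icc.mpr ⟨by omega, hw.2⟩, hwC⟩) hw.1
  have hF := hco.card_le_plusCount hplus
  rw [card_union_of_disjoint hdisj, card_image_insert sdiff_disjoint,
    card_image_insert sdiff_disjoint, card_sdiff, card_sdiff, Nat.card_Icc, Nat.card_Icc] at hF
  have hpieces : Disjoint (C₁ ∩ Icc 1 a) (C₂ ∩ Icc a n) := by
    simp only [disjoint_left, mem_inter, mem_Icc]
    rintro z ⟨hzC, -, hza⟩ ⟨-, haz, -⟩
    exact haC (le_antisymm hza haz ▸ hzC)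
  rw [card_union_of_disjoint hpieces] at hcard
  have := card_le_card (inter_subset_right (s₁ := C₁) (s₂ := Icc 1 a))
  have := card_le_card (inter_subset_right (s₁ := C₂) (s₂ := Icc a n))
  rw [Nat.card_Icc] at *
  omega

theorem IsCoSignotope.plusBelow_of_lt (hco : IsCoSignotope n d τ) (hp : plusCount τ + d ≤ n)
    {B : Finset ℕ} (hB : τ B = true) {c₁ c₂ : ℕ} (hc₁ : c₁ ∈ B) (hc₂ : c₂ ∈ B) (hlt : c₁ < c₂)
    (h₂ : PlusBelow n τ (B.erase c₂) c₂) : PlusBelow n τ (B.erase c₁) c₁ := by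
  refine (hco.plusBelow_or_plusAbove hB hc₁).resolve_right fun h₁ => ?_
  obtain ⟨hBU, hBd⟩ := hco.1 B hB
  refine hco.false_of_two_families hp (hBU hc₂) (notMem_erase c₂ B) h₂
    (fun w hw hcw => h₁ w hw (hlt.le.trans hcw)) (fun z _ w hw _ hcw heq => ?_) ?_
  · have : c₁ ∈ insert w (B.erase c₁) :=
      heq ▸ mem_insert_of_mem (mem_erase.mpr ⟨hlt.ne, hc₁⟩)
    rcases mem_insert.mp this with rfl | h
    · omega
    · exact notMem_erase c₁ B h
  · calc #(B.erase c₂ ∩ Icc 1 c₂ ∪ B.erase c₁ ∩ Icc c₂ n)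
        ≤ #B := card_le_card (union_subset (inter_subset_left.trans (erase_subset _ _))
          (inter_subset_left.trans (erase_subset _ _)))
      _ = d := hBd

/-- The two families of `+`-subsets involved are disjoint because `c` does not lie between `x`
and `y`. -/
theorem IsCoSignotope.not_plusBelow_and_plusAbove_swap (hco : IsCoSignotope n d τ)
    (hp : plusCount τ + d ≤ n) {B : Finset ℕ} (hB : τ B = true) {x y c : ℕ} (hx : x ∈ B)
    (hyB : y ∉ B) (hgap : ∀ z ∈ B.erase x, ¬(min x y < z ∧ z < max x y)) (hc : c ∈ B)
    (hcx : c ≠ x) (hbelow : PlusBelow n τ (B.erase c) c) :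
    ¬PlusAbove n τ ((insert y (B.erase x)).erase c) c := by
  intro habove
  obtain ⟨hBU, hBd⟩ := hco.1 B hB
  have hyc : y ≠ c := ne_of_mem_of_not_mem hc hyB |>.symm
  have hxy : x ≠ y := ne_of_mem_of_not_mem hx hyB
  refine hco.false_of_two_families hp (hBU hc) (notMem_erase c B) hbelow habove
    (fun z _ w _ hzc hcw heq => ?_) ?_
  · have hy : y ∈ insert z (B.erase c) := heq ▸ by simp [hyc]
    have hx' : x ∈ insert w ((insert y (B.erase x)).erase c) := heq ▸ by simp [hcx.symm, hx]
    simp only [mem_insert, mem_erase, hyB, and_false, or_false] at hy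
    simp only [mem_insert, mem_erase, hxy, ne_eq, not_true_eq_false, false_and, and_false,
      or_false] at hx'
    exact hgap c (mem_erase.mpr ⟨hcx, hc⟩) (by omega)
  · calc #(B.erase c ∩ Icc 1 c ∪ (insert y (B.erase x)).erase c ∩ Icc c n)
        ≤ #(insert y (B.erase c)) := by
          refine card_le_card fun z hz => ?_
          simp only [mem_union, mem_inter, mem_insert, mem_erase] at hz ⊢
          tauto
      _ = d := by
          rw [card_insert_of_notMem fun h => hyB (mem_of_mem_erase h), card_erase_of_mem hc, hBd]
          have : 0 < d := hBd ▸ card_pos.mpr ⟨c, hc⟩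
          omega

theorem IsCoSignotope.plusBelow_erase_iff_of_swap (hco : IsCoSignotope n d τ)
    (hp : plusCount τ + d ≤ n) {B : Finset ℕ} (hB : τ B = true) {x y c : ℕ} (hx : x ∈ B)
    (hyB : y ∉ B) (hB' : τ (insert y (B.erase x)) = true)
    (hgap : ∀ z ∈ B.erase x, ¬(min x y < z ∧ z < max x y)) (hc : c ∈ B) (hcx : c ≠ x) :
    PlusBelow n τ (B.erase c) c ↔ PlusBelow n τ ((insert y (B.erase x)).erase c) c := by
  have hyC : y ∉ B.erase x := fun h => hyB (mem_of_mem_erase h)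
  have hcB' : c ∈ insert y (B.erase x) := mem_insert_of_mem (mem_erase.mpr ⟨hcx, hc⟩)
  refine ⟨fun h => (hco.plusBelow_or_plusAbove hB' hcB').resolve_right
    (hco.not_plusBelow_and_plusAbove_swap hp hB hx hyB hgap hc hcx h), fun h => ?_⟩
  refine (hco.plusBelow_or_plusAbove hB hc).resolve_right ?_
  have hback : insert x ((insert y (B.erase x)).erase y) = B := by
    rw [erase_insert hyC, insert_erase hx]
  rw [← hback]
  refine hco.not_plusBelow_and_plusAbove_swap hp hB' (mem_insert_self y _) ?_ ?_ hcB'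
    (ne_of_mem_of_not_mem hc hyB) h
  · simp [ne_of_mem_of_not_mem hx hyB]
  · rw [erase_insert hyC, min_comm, max_comm]; exact hgap

open Classical in
noncomputable def leftCount (n : ℕ) (τ : Finset ℕ → Bool) (B : Finset ℕ) : ℕ :=
  #{c ∈ B | PlusBelow n τ (B.erase c) c}

open Classical in
noncomputable def alignedDistance (n : ℕ) (τ : Finset ℕ → Bool) (B : Finset ℕ) : ℕ :=
  ∑ c ∈ B, if PlusBelow n τ (B.erase c) c then c else n + 1 - c

open Classical in
/-- Swapping `x` for `y` along an edge of `G_{n,d}[τ]` keeps the alignment of every element,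
the moved one included. -/
theorem IsCoSignotope.sum_ite_plusBelow_insert_erase (hco : IsCoSignotope n d τ)
    (hp : plusCount τ + d ≤ n) {B : Finset ℕ} (hB : τ B = true) {x y : ℕ} (hx : x ∈ B)
    (hy : y ∈ Icc 1 n) (hyB : y ∉ B)
    (hB' : τ (insert y (B.erase x)) = true)
    (hgap : ∀ z ∈ B.erase x, ¬(min x y < z ∧ z < max x y)) (f g : ℕ → ℕ) :
    (∑ c ∈ insert y (B.erase x),
        if PlusBelow n τ ((insert y (B.erase x)).erase c) c then f c else g c) +
      (if PlusBelow n τ (B.erase x) x then f x else g x) =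
    (∑ c ∈ B, if PlusBelow n τ (B.erase c) c then f c else g c) +
      (if PlusBelow n τ (B.erase x) x then f y else g y) := by
  have hyC : y ∉ B.erase x := fun h => hyB (mem_of_mem_erase h)
  have hrest : (∑ c ∈ B.erase x,
      if PlusBelow n τ ((insert y (B.erase x)).erase c) c then f c else g c) =
      ∑ c ∈ B.erase x, if PlusBelow n τ (B.erase c) c then f c else g c :=
    sum_congr rfl fun c hc => by
      obtain ⟨hcx, hc⟩ := mem_erase.mp hc
      rw [hco.plusBelow_erase_iff_of_swap hp hB hx hyB hB' hgap hc hcx]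
  rw [sum_insert hyC, erase_insert hyC, hco.plusBelow_moved_iff hB hx hy hyB hB', hrest,
    ← add_sum_erase B _ hx]
  ring

theorem IsCoSignotope.leftCount_eq_of_gAdj (hco : IsCoSignotope n d τ)
    (hp : plusCount τ + d ≤ n) {B B' : Finset ℕ} (hB : τ B = true) (hB' : τ B' = true)
    (hadj : GAdj n d B B') : leftCount n τ B = leftCount n τ B' := by
  obtain ⟨-, -, -, -, x, hx, y, hy, hyB, rfl, hgap⟩ := hadj
  have := hco.sum_ite_plusBelow_insert_erase hp hB hx hy hyB hB' hgap (fun _ => 1) (fun _ => 0)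
  simp only [leftCount, card_filter]
  split_ifs at this <;> omega

theorem IsCoSignotope.leftCount_eq_of_plusConn (hco : IsCoSignotope n d τ)
    (hp : plusCount τ + d ≤ n) {B B' : Finset ℕ} (h : plusConn n d τ B B') :
    leftCount n τ B = leftCount n τ B' := by
  induction h with
  | refl => rfl
  | tail _ hstep ih => exact ih.trans (hco.leftCount_eq_of_gAdj hp hstep.1 hstep.2.1 hstep.2.2)

open Classical in
theorem IsCoSignotope.leftCount_sourceSubset (hco : IsCoSignotope n d τ)
    (hp : plusCount τ + d ≤ n) {i : ℕ} (hS : τ (sourceSubset n d i) = true) :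
    leftCount n τ (sourceSubset n d i) = i := by
  rw [leftCount, show {c ∈ sourceSubset n d i | PlusBelow n τ _ c} = Icc 1 i from ?_,
    Nat.card_Icc, Nat.add_sub_cancel]
  ext c
  simp only [mem_filter, mem_Icc]
  constructor
  · rintro ⟨hc, hbelow⟩
    refine (mem_sourceSubset.mp hc).resolve_right fun hci => ?_
    refine hco.not_plusBelow_and_plusAbove hp hS hc ⟨hbelow, plusAbove_of_Icc_subset hS hc ?_⟩
    intro z hz
    rw [mem_Icc] at hz
    exact mem_sourceSubset.mpr (Or.inr ⟨by omega, hz.2⟩)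
  · intro hci
    refine ⟨mem_sourceSubset.mpr (Or.inl hci), plusBelow_of_Icc_subset hS
      (mem_sourceSubset.mpr (Or.inl hci)) fun z hz => ?_⟩
    rw [mem_Icc] at hz
    exact mem_sourceSubset.mpr (Or.inl ⟨hz.1, by omega⟩)

open Classical in
/-- Move a left-aligned element one step down or a right-aligned one one step up. -/
theorem IsCoSignotope.exists_gAdj_lt_or_eq_sourceSubset (hco : IsCoSignotope n d τ)
    (hp : plusCount τ + d ≤ n) {B : Finset ℕ} (hB : τ B = true) :
    (∃ B', τ B' = true ∧ GAdj n d B B' ∧ alignedDistance n τ B' < alignedDistance n τ B) ∨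
      ∃ i ≤ d, B = sourceSubset n d i := by
  obtain ⟨hBU, hBd⟩ := hco.1 B hB
  have move : ∀ c ∈ B, ∀ y ∈ Icc 1 n, y ∉ B → (y + 1 = c ∨ c + 1 = y) →
      τ (insert y (B.erase c)) = true → GAdj n d B (insert y (B.erase c)) ∧
        alignedDistance n τ (insert y (B.erase c)) +
          (if PlusBelow n τ (B.erase c) c then c else n + 1 - c) =
        alignedDistance n τ B + (if PlusBelow n τ (B.erase c) c then y else n + 1 - y) := by
    intro c hc y hy hyB hyc hB'
    have hgap : ∀ z ∈ B.erase c, ¬(min c y < z ∧ z < max c y) := fun z _ => by omega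
    exact ⟨hBd ▸ gAdj_insert_erase hBU hc hy hyB hgap,
      hco.sum_ite_plusBelow_insert_erase hp hB hc hy hyB hB' hgap _ _⟩
  by_cases hdown : ∃ c ∈ B, PlusBelow n τ (B.erase c) c ∧ 1 < c ∧ c - 1 ∉ B
  · obtain ⟨c, hc, hbelow, hc1, hcB⟩ := hdown
    have hcn := mem_Icc.mp (hBU hc)
    have hy : c - 1 ∈ Icc 1 n := mem_Icc.mpr ⟨by omega, by omega⟩
    have hB' := hbelow (c - 1) (mem_sdiff.mpr ⟨hy, fun h => hcB (mem_of_mem_erase h)⟩)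
      (Nat.sub_le c 1)
    obtain ⟨hadj, hdist⟩ := move c hc _ hy hcB (Or.inl (by omega)) hB'
    rw [if_pos hbelow, if_pos hbelow] at hdist
    exact Or.inl ⟨_, hB', hadj, by omega⟩
  by_cases hup : ∃ c ∈ B, ¬PlusBelow n τ (B.erase c) c ∧ c < n ∧ c + 1 ∉ B
  · obtain ⟨c, hc, hbelow, hcn, hcB⟩ := hup
    have hy : c + 1 ∈ Icc 1 n := mem_Icc.mpr ⟨by omega, by omega⟩
    have hB' := ((hco.plusBelow_or_plusAbove hB hc).resolve_left hbelow) (c + 1)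
      (mem_sdiff.mpr ⟨hy, fun h => hcB (mem_of_mem_erase h)⟩) (Nat.le_succ c)
    obtain ⟨hadj, hdist⟩ := move c hc _ hy hcB (Or.inr rfl) hB'
    rw [if_neg hbelow, if_neg hbelow] at hdist
    exact Or.inl ⟨_, hB', hadj, by omega⟩
  push Not at hdown hup
  exact Or.inr ⟨_, hBd ▸ card_filter_le _ _, eq_sourceSubset_of_closed hBU hBd _
    (fun c₁ hc₁ c₂ hc₂ hlt => hco.plusBelow_of_lt hp hB hc₁ hc₂ hlt) hdown hup⟩

theorem IsCoSignotope.exists_plusConn_sourceSubset (hco : IsCoSignotope n d τ)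
    (hp : plusCount τ + d ≤ n) {B : Finset ℕ} (hB : τ B = true) :
    ∃ i ≤ d, τ (sourceSubset n d i) = true ∧ plusConn n d τ B (sourceSubset n d i) := by
  induction hk : alignedDistance n τ B using Nat.strong_induction_on generalizing B with
  | _ k ih =>
    rcases hco.exists_gAdj_lt_or_eq_sourceSubset hp hB with ⟨B', hB', hadj, hlt⟩ | ⟨i, hi, rfl⟩
    · obtain ⟨i, hi, hS, hconn⟩ := ih _ (hk ▸ hlt) hB' rfl
      exact ⟨i, hi, hS, .head ⟨hB, hB', hadj⟩ hconn⟩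
    · exact ⟨i, hi, hB, .refl⟩

end CoSignotope

theorem statement4_general (n d p : ℕ) (hp : p + d ≤ n)
    (τ : Finset ℕ → Bool) (hτ : τ ∈ coSigSet n d p)
    (B : Finset ℕ) (hB : τ B = true) :
    ∃! i : ℕ, i ≤ d ∧ τ (sourceSubset n d i) = true ∧
      plusConn n d τ B (sourceSubset n d i) := by
  obtain ⟨hco, rfl⟩ := hτ
  obtain ⟨i, hi, hS, hconn⟩ := hco.exists_plusConn_sourceSubset hp hB
  refine ⟨i, ⟨hi, hS, hconn⟩, fun j ⟨_, hSj, hconnj⟩ => ?_⟩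
  rw [← hco.leftCount_sourceSubset hp hSj, ← hco.leftCount_eq_of_plusConn hp hconnj,
    hco.leftCount_eq_of_plusConn hp hconn, hco.leftCount_sourceSubset hp hS]

/-- **Lemma.** For `p ≤ n - d` and `τ ∈ 𝒮̄_p(n,d)`, each `+`-component of `τ` contains
exactly one source subset: every `+`-subset `B` is connected within the `+`-subsets to
`S_{n,d,i}` for exactly one index `0 ≤ i ≤ d`. -/
theorem statement4 (n d p : ℕ) (hdn : d < n) (hp : p + d ≤ n)
    (τ : Finset ℕ → Bool) (hτ : τ ∈ coSigSet n d p)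
    (B : Finset ℕ) (hB : τ B = true) :
    ∃! i : ℕ, i ≤ d ∧ τ (sourceSubset n d i) = true ∧
      plusConn n d τ B (sourceSubset n d i) :=
  statement4_general n d p hp τ hτ B hB
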